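/- Let W̃ be the affine Weyl group W^σ ⋉ (c+ȟ)M of the fixed subalgebra ℊ^σ acting on 𝔥*_{σ,ℝ} by the shifted action w ⋆ λ = w·(λ + ρ_σ) − ρ_σ. For any element t ∈ T^{σ,reg}_c of the finite set of regular level-c torus points, any λ ∈ D_{c,σ}, and any w = z·τ_η ∈ W^†_{σ,c+ȟ} (z ∈ W^σ, η ∈ (c+ȟ)M), the restricted Weyl characters satisfy χ̄_{w⋆λ} = (−1)^{ℓ(w)} χ̄_λ on T^{σ,reg}_c. -/

import Mathlib

/-!
Multiplying the Weyl character formula by the denominator turns the claim into an identity of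
alternants `∑ y, ε y e^{y μ}`. Replacing `μ` by `z • μ` multiplies the alternant by `ε z⁻¹`
(reindex the sum by `y ↦ y z`), and adding `η ∈ (c+ȟ)M` does not change it at level-`c` torus
points, since every `e^{y η}` is `1` there. As `ε z = ±1`, dividing by `D t ≠ 0` gives the sign.
-/

section Alternant

variable {H W R : Type*} [AddCommGroup H] [Group W] [Fintype W] [DistribMulAction W H]
  [CommSemiring R]

/-- The numerator `∑_{y ∈ W} ε(y) e^{y μ}` of the Weyl character formula, for a character
`e : H → R` evaluated at a fixed torus point. -/
def alternant (ε : W →* R) (e : H → R) (μ : H) : R :=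
  ∑ y : W, ε y * e (y • μ)

theorem alternant_smul (ε : W →* R) (e : H → R) (z : W) (μ : H) :
    ε z * alternant ε e (z • μ) = alternant ε e μ := by
  unfold alternant
  rw [Finset.mul_sum]
  refine Fintype.sum_equiv (Equiv.mulRight z) _ _ fun y => ?_
  simp only [Equiv.coe_mulRight, map_mul, mul_smul]
  ring

theorem alternant_add_of_forall_smul_eq_one (ε : W →* R) {e : H → R}
    (he : ∀ x y, e (x + y) = e x * e y) {η : H} (hη : ∀ y : W, e (y • η) = 1) (μ : H) :
    alternant ε e (μ + η) = alternant ε e μ := by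
  unfold alternant
  simp only [smul_add, he, hη, mul_one]

end Alternant

/-- Sign identity for restricted Weyl characters (Lemma on `χ̄_{w⋆λ}`).
Setup: `H` is the weight lattice `P_σ` of `ℊ^σ`, `W` the finite Weyl group `W^σ` acting on
`H`, `ε` its sign character, `E x t = e^x(t)` the exponential pairing with the torus points
`t`, `Treg = T^{σ,reg}_c` the regular level-`c` torus points, `M` the lattice `(c+ȟ)M`
(`W`-orbits of which pair trivially with `T^σ_c`), `D` the Weyl denominator (nonvanishing
on regular points) and `χ` the Weyl characters (given by the Weyl character formula).
For `w = z·τ_η ∈ W^†_{σ,c+ȟ}` (`z ∈ W^σ`, `η ∈ (c+ȟ)M`), with `⋆` the shifted action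
`w ⋆ λ = z•(λ + ρ_σ + η) − ρ_σ` and `(−1)^{ℓ(w)} = ε(z)` (the length of a translation
being even), one has `χ̄_{w⋆λ} = (−1)^{ℓ(w)} χ̄_λ` on `T^{σ,reg}_c`. -/
theorem stmt10 (H : Type*) [AddCommGroup H]
    (W : Type*) [Group W] [Fintype W] [DistribMulAction W H]
    (ε : W →* ℂ)  -- the sign character of W^σ
    (T : Type*) (Treg : Set T)  -- T^σ and its regular level-c points T^{σ,reg}_c
    (E : H → T → ℂ) (hE : ∀ (x y : H) (t : T), E (x + y) t = E x t * E y t)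
    (ρσ : H)  -- ρ_σ
    (M : AddSubgroup H)  -- the lattice (c+ȟ)M
    (hM : ∀ x ∈ M, ∀ (y : W), ∀ t ∈ Treg, E (y • x) t = 1)
    (D : T → ℂ) (hD : ∀ t ∈ Treg, D t ≠ 0)  -- the Weyl denominator δ_σ
    (χ : H → T → ℂ)
    (hWeyl : ∀ (μ : H), ∀ t ∈ Treg,
      χ μ t * D t = ∑ y : W, ε y * E (y • (μ + ρσ)) t)  -- Weyl character formula
    (lam : H) (z : W) (η : H) (hη : η ∈ M)
    (ℓw : ℕ) (hℓ : ((-1 : ℂ)) ^ ℓw = ε z)  -- ℓ(w) ≡ ℓ(z) mod 2 since ℓ(τ_η) is even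
    : ∀ t ∈ Treg, χ (z • (lam + ρσ + η) - ρσ) t = (-1 : ℂ) ^ ℓw * χ lam t := by
  intro t ht
  have hWeyl' (μ : H) : χ μ t * D t = alternant ε (E · t) (μ + ρσ) := hWeyl μ t ht
  have hsign : (-1 : ℂ) ^ ℓw * ε z = 1 := by
    rw [← hℓ, ← mul_pow, neg_one_mul, neg_neg, one_pow]
  have key : ε z * χ (z • (lam + ρσ + η) - ρσ) t = χ lam t := by
    apply mul_right_cancel₀ (hD t ht)
    rw [mul_assoc, hWeyl', hWeyl', sub_add_cancel, alternant_smul,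
      alternant_add_of_forall_smul_eq_one ε (hE · · t) (hM η hη · t ht)]
  calc χ (z • (lam + ρσ + η) - ρσ) t
      = (-1 : ℂ) ^ ℓw * ε z * χ (z • (lam + ρσ + η) - ρσ) t := by rw [hsign, one_mul]
    _ = (-1 : ℂ) ^ ℓw * χ lam t := by rw [mul_assoc, key]
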